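/- Single blocked node local detour (Lemma: if there is a hole comprising a single blocked node n_b, there always exists a path from node n_b−1 to node n_b+1 passing only through edge-connected neighbours of the blocked node): for every N ≥ 1 and every index n_b with 1 ≤ n_b ≤ 4^N−2, there exists a finite sequence c_0, c_1, ..., c_k of points of the grid {0,...,2^N−1} × {0,...,2^N−1} with c_0 = h_N(n_b−1) and c_k = h_N(n_b+1), such that every c_j is edge connected to h_N(n_b) (in particular no c_j equals h_N(n_b)), and for every j < k the points c_j and c_{j+1} are either edge connected or vertex connected. -/

import Mathlib

/-- The `N`-th order approximated Hilbert curve, mapping indices `{0,...,4^N-1}`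
to nodes of the grid `{0,...,2^N-1} × {0,...,2^N-1} ⊆ ℤ × ℤ`. -/
def hilbert : ℕ → ℕ → ℤ × ℤ
  | 0, _ => (0, 0)
  | 1, i =>
    if i = 0 then (0, 0)
    else if i = 1 then (0, 1)
    else if i = 2 then (1, 1)
    else (1, 0)
  | N + 2, i =>
    let q := i / 4 ^ (N + 1)
    let s : ℤ := 2 ^ (N + 1)
    let p := hilbert (N + 1) (i % 4 ^ (N + 1))
    if q = 0 then (p.2, p.1)
    else if q = 1 then (p.1, p.2 + s)
    else if q = 2 then (p.1 + s, p.2 + s)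
    else (2 * s - 1 - p.2, s - 1 - p.1)

/-- Euclidean distance between two points of `ℤ × ℤ`. -/
noncomputable def euclDist (a b : ℤ × ℤ) : ℝ :=
  Real.sqrt (((a.1 - b.1 : ℤ) : ℝ) ^ 2 + ((a.2 - b.2 : ℤ) : ℝ) ^ 2)

/-- Two points of `ℤ × ℤ` are edge connected if their Euclidean distance equals 1. -/
def EdgeConnected (a b : ℤ × ℤ) : Prop := euclDist a b = 1

/-- Two points of `ℤ × ℤ` are vertex connected if both coordinates differ by exactly 1. -/
def VertexConnected (a b : ℤ × ℤ) : Prop := |a.1 - b.1| = 1 ∧ |a.2 - b.2| = 1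

/-- Membership in the grid `{0,...,2^N-1} × {0,...,2^N-1}`. -/
def InGrid (N : ℕ) (p : ℤ × ℤ) : Prop :=
  0 ≤ p.1 ∧ p.1 ≤ 2 ^ N - 1 ∧ 0 ≤ p.2 ∧ p.2 ≤ 2 ^ N - 1

/-- The closed segment from `u` to `v` (centres of cells, viewed in `ℝ²`) is disjoint
from the open unit cell centred at `c`. -/
def SegAvoidsCell (u v c : ℤ × ℤ) : Prop :=
  ∀ t : ℝ, t ∈ Set.Icc (0 : ℝ) 1 →
    ¬ (|(1 - t) * (u.1 : ℝ) + t * (v.1 : ℝ) - (c.1 : ℝ)| < 1 / 2 ∧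
       |(1 - t) * (u.2 : ℝ) + t * (v.2 : ℝ) - (c.2 : ℝ)| < 1 / 2)

/-- An evasion tour for the blocked index set `B` on the `N`-th order Hilbert grid:
a sequence of waypoints `w 0, ..., w m` in the grid, starting at the entry node,
ending at the exit node, avoiding all blocked nodes, covering every unblocked grid
point, and whose straight-line segments avoid the interiors of all blocked cells. -/
def IsEvasionTour (N : ℕ) (B : Finset ℕ) (m : ℕ) (w : ℕ → ℤ × ℤ) : Prop :=
  w 0 = hilbert N 0 ∧
  w m = hilbert N (4 ^ N - 1) ∧
  (∀ j ≤ m, InGrid N (w j)) ∧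
  (∀ j ≤ m, ∀ b ∈ B, w j ≠ hilbert N b) ∧
  (∀ p : ℤ × ℤ, InGrid N p → (∀ b ∈ B, p ≠ hilbert N b) → ∃ j ≤ m, w j = p) ∧
  (∀ j < m, ∀ b ∈ B, SegAvoidsCell (w j) (w (j + 1)) (hilbert N b))

/-!
Consecutive nodes of the Hilbert curve are grid neighbours: by induction, each quadrant of
`h_{N+2}` is an isometric copy of `h_{N+1}`, and consecutive quadrants are joined by the last
node `(2^{N+1} - 1, 0)` of one copy and the first node `(0, 0)` of the next. Hence
`h(n_b - 1)` and `h(n_b + 1)` are neighbours of `h(n_b)`. If they are perpendicular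
neighbours they are diagonal to each other; if they are opposite, a perpendicular neighbour
of `h(n_b)` inside the grid (which has side `2^N ≥ 2`) is diagonal to both.
-/

/-- The isometry placing a copy of the order-`N` curve, scaled to side `s = 2^N`,
in quadrant `q` of the order-`N+1` curve. -/
def quadrantPlace (s : ℤ) (q : ℕ) (p : ℤ × ℤ) : ℤ × ℤ :=
  if q = 0 then (p.2, p.1)
  else if q = 1 then (p.1, p.2 + s)
  else if q = 2 then (p.1 + s, p.2 + s)
  else (2 * s - 1 - p.2, s - 1 - p.1)

def GridAdj (a b : ℤ × ℤ) : Prop :=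
  (a.1 - b.1).natAbs + (a.2 - b.2).natAbs = 1

theorem GridAdj.symm {a b : ℤ × ℤ} (h : GridAdj a b) : GridAdj b a := by
  unfold GridAdj at *; omega

theorem GridAdj.edgeConnected {a b : ℤ × ℤ} (h : GridAdj a b) : EdgeConnected a b := by
  have hsq : (a.1 - b.1) ^ 2 + (a.2 - b.2) ^ 2 = 1 := by
    rw [← Int.natAbs_sq (a.1 - b.1), ← Int.natAbs_sq (a.2 - b.2)]
    unfold GridAdj at h
    obtain ⟨h1, h2⟩ | ⟨h1, h2⟩ :
        (a.1 - b.1).natAbs = 0 ∧ (a.2 - b.2).natAbs = 1 ∨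
          (a.1 - b.1).natAbs = 1 ∧ (a.2 - b.2).natAbs = 0 := by omega
    all_goals simp [h1, h2]
  have hsqR : ((a.1 - b.1 : ℤ) : ℝ) ^ 2 + ((a.2 - b.2 : ℤ) : ℝ) ^ 2 = 1 := by exact_mod_cast hsq
  rw [EdgeConnected, euclDist, hsqR, Real.sqrt_one]

theorem GridAdj.quadrantPlace {p p' : ℤ × ℤ} (h : GridAdj p p') (s : ℤ) (q : ℕ) :
    GridAdj (quadrantPlace s q p) (quadrantPlace s q p') := by
  unfold GridAdj at *
  unfold _root_.quadrantPlace
  split_ifs <;> dsimp only <;> omega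

theorem gridAdj_quadrantPlace_succ (s : ℤ) {q : ℕ} (hq : q < 3) :
    GridAdj (quadrantPlace s q (s - 1, 0)) (quadrantPlace s (q + 1) (0, 0)) := by
  unfold GridAdj quadrantPlace
  split_ifs <;> simp_all <;> omega

theorem InGrid.quadrantPlace {N : ℕ} {p : ℤ × ℤ} (h : InGrid N p) (q : ℕ) :
    InGrid (N + 1) (quadrantPlace (2 ^ N) q p) := by
  obtain ⟨h1, h2, h3, h4⟩ := h
  have hs : (2 : ℤ) ^ (N + 1) = 2 * 2 ^ N := by ring
  unfold _root_.quadrantPlace InGrid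
  split_ifs <;> dsimp only <;> omega

theorem hilbert_add_two (N i : ℕ) :
    hilbert (N + 2) i =
      quadrantPlace (2 ^ (N + 1)) (i / 4 ^ (N + 1)) (hilbert (N + 1) (i % 4 ^ (N + 1))) :=
  rfl

theorem hilbert_add_two_mul_add (N q : ℕ) {r : ℕ} (hr : r < 4 ^ (N + 1)) :
    hilbert (N + 2) (4 ^ (N + 1) * q + r) = quadrantPlace (2 ^ (N + 1)) q (hilbert (N + 1) r) := by
  have hpos : 0 < 4 ^ (N + 1) := by positivity
  rw [hilbert_add_two, Nat.mul_add_div hpos, Nat.div_eq_of_lt hr, add_zero, Nat.mul_add_mod,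
    Nat.mod_eq_of_lt hr]

theorem hilbert_mem_grid : ∀ N i, InGrid N (hilbert N i)
  | 0, _ => by simp [hilbert, InGrid]
  | 1, i => by unfold hilbert; split_ifs <;> simp [InGrid]
  | N + 2, i => by rw [hilbert_add_two]; exact (hilbert_mem_grid (N + 1) _).quadrantPlace _

theorem hilbert_zero : ∀ N, hilbert N 0 = (0, 0)
  | 0 => rfl
  | 1 => rfl
  | N + 2 => by rw [hilbert_add_two, Nat.zero_div, Nat.zero_mod, hilbert_zero]; rfl

theorem hilbert_four_pow_sub_one : ∀ N, hilbert (N + 1) (4 ^ (N + 1) - 1) = (2 ^ (N + 1) - 1, 0)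
  | 0 => rfl
  | N + 1 => by
    have hpos : 0 < 4 ^ (N + 1) := by positivity
    have hsplit : 4 ^ (N + 2) - 1 = 4 ^ (N + 1) * 3 + (4 ^ (N + 1) - 1) := by
      rw [pow_succ]; omega
    rw [hsplit, hilbert_add_two_mul_add _ _ (by omega), hilbert_four_pow_sub_one N]
    simp only [quadrantPlace]
    norm_num
    ring

theorem hilbert_gridAdj_succ : ∀ N i, i + 1 < 4 ^ (N + 1) →
    GridAdj (hilbert (N + 1) i) (hilbert (N + 1) (i + 1))
  | 0, i, hi => by
    have : i < 3 := by norm_num at hi; omega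
    interval_cases i <;> simp [hilbert, GridAdj]
  | N + 1, i, hi => by
    have hpos : 0 < 4 ^ (N + 1) := by positivity
    obtain ⟨q, r, hr, rfl⟩ : ∃ q r, r < 4 ^ (N + 1) ∧ i = 4 ^ (N + 1) * q + r :=
      ⟨i / 4 ^ (N + 1), i % 4 ^ (N + 1), Nat.mod_lt _ hpos, (Nat.div_add_mod _ _).symm⟩
    rw [hilbert_add_two_mul_add _ _ hr]
    by_cases hr1 : r + 1 < 4 ^ (N + 1)
    · rw [show 4 ^ (N + 1) * q + r + 1 = 4 ^ (N + 1) * q + (r + 1) by ring,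
        hilbert_add_two_mul_add _ _ hr1]
      exact (hilbert_gridAdj_succ N r hr1).quadrantPlace _ _
    · have hq : q < 3 := by
        rw [pow_succ 4 (N + 1)] at hi
        nlinarith
      rw [show 4 ^ (N + 1) * q + r + 1 = 4 ^ (N + 1) * (q + 1) + 0 by rw [mul_add]; omega,
        hilbert_add_two_mul_add _ _ hpos, show r = 4 ^ (N + 1) - 1 by omega,
        hilbert_four_pow_sub_one, hilbert_zero]
      exact gridAdj_quadrantPlace_succ _ hq

theorem exists_vertexConnected_around {N : ℕ} (hN : 1 ≤ N) {a b d : ℤ × ℤ} (hb : InGrid N b)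
    (hdb : GridAdj d b) (hopp : a.1 + d.1 = 2 * b.1 ∧ a.2 + d.2 = 2 * b.2) :
    ∃ e, InGrid N e ∧ GridAdj e b ∧ VertexConnected a e ∧ VertexConnected e d := by
  have h2N : (2 : ℤ) ≤ 2 ^ N := le_self_pow₀ (by norm_num) (by omega)
  obtain ⟨hb1, hb2, hb3, hb4⟩ := hb
  unfold GridAdj at hdb
  simp only [InGrid, GridAdj, VertexConnected, Int.abs_eq_natAbs]
  by_cases hhor : a.2 = b.2
  · by_cases hup : b.2 + 1 ≤ 2 ^ N - 1
    · exact ⟨(b.1, b.2 + 1), by omega⟩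
    · exact ⟨(b.1, b.2 - 1), by omega⟩
  · by_cases hright : b.1 + 1 ≤ 2 ^ N - 1
    · exact ⟨(b.1 + 1, b.2), by omega⟩
    · exact ⟨(b.1 - 1, b.2), by omega⟩

theorem exists_local_detour {N : ℕ} (hN : 1 ≤ N) {a b d : ℤ × ℤ} (ha : InGrid N a)
    (hb : InGrid N b) (hd : InGrid N d) (hab : GridAdj a b) (hdb : GridAdj d b) :
    ∃ (k : ℕ) (c : ℕ → ℤ × ℤ), c 0 = a ∧ c k = d ∧
      (∀ j ≤ k, InGrid N (c j)) ∧
      (∀ j ≤ k, EdgeConnected (c j) b) ∧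
      (∀ j < k, EdgeConnected (c j) (c (j + 1)) ∨ VertexConnected (c j) (c (j + 1))) := by
  by_cases had : a = d
  · subst had
    exact ⟨0, fun _ => a, rfl, rfl, fun _ _ => ha, fun _ _ => hab.edgeConnected, by simp⟩
  by_cases hvad : VertexConnected a d
  · refine ⟨1, fun j => if j = 0 then a else d, rfl, rfl, ?_, ?_, ?_⟩
    all_goals intro j hj; interval_cases j
    all_goals simp [*, GridAdj.edgeConnected]
  obtain ⟨e, he, heb, hae, hed⟩ := exists_vertexConnected_around (a := a) hN hb hdb (by
    simp only [VertexConnected, Int.abs_eq_natAbs, Prod.ext_iff] at had hvad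
    unfold GridAdj at hab hdb
    omega)
  refine ⟨2, fun j => if j = 0 then a else if j = 1 then e else d, rfl, rfl, ?_, ?_, ?_⟩
  all_goals intro j hj; interval_cases j
  all_goals simp [*, GridAdj.edgeConnected]

theorem hilbert_single_blocked_local_detour_general (N nb : ℕ) (h1 : 1 ≤ nb)
    (h2 : nb ≤ 4 ^ N - 2) :
    ∃ (k : ℕ) (c : ℕ → ℤ × ℤ),
      c 0 = hilbert N (nb - 1) ∧
      c k = hilbert N (nb + 1) ∧
      (∀ j ≤ k, InGrid N (c j)) ∧
      (∀ j ≤ k, EdgeConnected (c j) (hilbert N nb)) ∧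
      (∀ j < k, EdgeConnected (c j) (c (j + 1)) ∨ VertexConnected (c j) (c (j + 1))) := by
  -- `4 ^ 0 - 2` truncates to `0`, so `h1` and `h2` rule out `N = 0`.
  have hN : N ≠ 0 := by
    rintro rfl
    simp at h2
    omega
  obtain ⟨M, rfl⟩ := Nat.exists_eq_add_one_of_ne_zero hN
  obtain ⟨i, rfl⟩ := Nat.exists_eq_add_one_of_ne_zero (Nat.one_le_iff_ne_zero.mp h1)
  have hab := hilbert_gridAdj_succ M i (by omega)
  have hbd := hilbert_gridAdj_succ M (i + 1) (by omega)
  exact exists_local_detour (by omega) (hilbert_mem_grid _ _) (hilbert_mem_grid _ _)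
    (hilbert_mem_grid _ _) hab hbd.symm

theorem hilbert_single_blocked_local_detour (N nb : ℕ) (hN : 1 ≤ N) (h1 : 1 ≤ nb)
    (h2 : nb ≤ 4 ^ N - 2) :
    ∃ (k : ℕ) (c : ℕ → ℤ × ℤ),
      c 0 = hilbert N (nb - 1) ∧
      c k = hilbert N (nb + 1) ∧
      (∀ j ≤ k, InGrid N (c j)) ∧
      (∀ j ≤ k, EdgeConnected (c j) (hilbert N nb)) ∧
      (∀ j < k, EdgeConnected (c j) (c (j + 1)) ∨ VertexConnected (c j) (c (j + 1))) :=
  hilbert_single_blocked_local_detour_general N nb h1 h2
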